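/- Let T be a tree of order n ≥ 8, let e be an edge of T whose deletion yields components T₁ and T₂, and let σ be the number of Laplacian eigenvalues of the disjoint union T₁ ∪ T₂ that are ≥ 2 − 4/n. If k₁ and k₂ denote the number of Laplacian eigenvalues of T₁ and T₂ respectively that are ≥ 2 − 4/n (so k₁ + k₂ = σ), then LE(T) ≥ 2·S_{k₁}(T₁) + 2·S_{k₂}(T₂) − 4σ + 4σ/n, where S_k(G) denotes the sum of the k largest Laplacian eigenvalues of G. -/

import Mathlib

/-!
Deleting an edge lowers the Laplacian in the Loewner order: `L(T) - L(T - e)` is positive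
semidefinite. Writing the eigenvectors `w_j` of `L(T - e)` in an orthonormal eigenbasis `u_i` of
`L(T)`, the squared overlaps `M i j = |⟪u_i, w_j⟫|²` form a doubly stochastic matrix with
`ν_j = ⟪w_j, L(T - e) w_j⟫ ≤ ⟪w_j, L(T) w_j⟫ = ∑ i, M i j * μ_i`. Averaging against `M` gives
`∑ j ∈ S, (ν_j - c) ≤ ∑ i, (μ_i - c)⁺` for every set `S` of eigenvalues of `T - e = T₁ ∪ T₂` and
every `c`. The eigenvalues of `T` have mean `c = 2 - 2/n` (the trace is twice the number of
edges), so `LE(T) = ∑ i, |μ_i - c| = 2 ∑ i, (μ_i - c)⁺`; take for `S` the first `k₁` eigenvalues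
of `T₁` and the first `k₂` of `T₂`, at most `σ` in all.
-/

open Finset Polynomial Matrix ComplexOrder

theorem Finset.sum_abs_eq_two_nsmul_sum_posPart {ι α : Type*} [Lattice α] [AddCommGroup α]
    [AddLeftMono α] (s : Finset ι) {f : ι → α} (hf : ∑ i ∈ s, f i = 0) :
    ∑ i ∈ s, |f i| = 2 • ∑ i ∈ s, (f i)⁺ := by
  rw [← add_zero (∑ i ∈ s, |f i|), ← hf, ← sum_add_distrib, smul_sum]
  exact sum_congr rfl fun i _ => abs_add_eq_two_nsmul_posPart (f i)

theorem Multiset.le_map_iff {α β : Type*} {f : α → β} {s : Multiset β} {t : Multiset α} :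
    s ≤ t.map f ↔ ∃ u ≤ t, u.map f = s := by
  refine ⟨fun h => ?_, fun ⟨u, hut, hu⟩ => hu ▸ Multiset.map_le_map hut⟩
  induction s using Quotient.inductionOn
  induction t using Quotient.inductionOn
  obtain ⟨l, hperm, hsub⟩ := h
  obtain ⟨l', hl', rfl⟩ := List.sublist_map_iff.mp hsub
  exact ⟨l', hl'.subperm, Quotient.sound hperm⟩

theorem Finset.exists_subset_map_val_eq {α β : Type*} {f : α → β} {s : Multiset β}
    {T : Finset α} (h : s ≤ T.val.map f) : ∃ S ⊆ T, S.val.map f = s := by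
  obtain ⟨u, hu, rfl⟩ := Multiset.le_map_iff.mp h
  exact ⟨⟨u, Multiset.nodup_of_le hu T.nodup⟩, val_le_iff.mp hu, rfl⟩

theorem Polynomial.roots_prod_univ_X_sub_C {R ι : Type*} [CommRing R] [IsDomain R] [Fintype ι]
    (a : ι → R) : (∏ i, (X - C (a i))).roots = univ.val.map a := by
  have := roots_multiset_prod_X_sub_C (univ.val.map a)
  rwa [Multiset.map_map, ← prod_eq_multiset_prod] at this

theorem Polynomial.map_add_map_le_roots_prod_mul_prod {R ι κ : Type*} [CommRing R] [IsDomain R]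
    [Fintype ι] [Fintype κ] (a : ι → R) (b : κ → R) (s : Finset ι) (t : Finset κ) :
    s.val.map a + t.val.map b ≤ ((∏ i, (X - C (a i))) * ∏ j, (X - C (b j))).roots := by
  rw [roots_mul (by simp [Monic.ne_zero, monic_prod_of_monic, monic_X_sub_C]),
    roots_prod_univ_X_sub_C, roots_prod_univ_X_sub_C]
  exact add_le_add (Multiset.map_le_map (val_le_iff.2 (subset_univ s)))
    (Multiset.map_le_map (val_le_iff.2 (subset_univ t)))

theorem Matrix.trace_eq_sum_of_charpoly_eq_prod {R n ι : Type*} [CommRing R] [IsDomain R]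
    [Fintype n] [DecidableEq n] [Fintype ι] {A : Matrix n n R} {a : ι → R}
    (h : A.charpoly = ∏ i, (X - C (a i))) : A.trace = ∑ i, a i := by
  rw [trace_eq_sum_roots_charpoly_of_splits (h ▸ Splits.prod fun i _ => Splits.X_sub_C _), h,
    roots_prod_univ_X_sub_C, sum_map_val]

theorem Matrix.sum_sub_le_sum_posPart_of_le_vecMul {n R : Type*} [Fintype n] [DecidableEq n]
    [Ring R] [LinearOrder R] [IsOrderedRing R] {M : Matrix n n R}
    (hM : M ∈ doublyStochastic R n) {x y : n → R} (hxy : x ≤ y ᵥ* M) (S : Finset n) (c : R) :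
    ∑ j ∈ S, (x j - c) ≤ ∑ i, (y i - c)⁺ := by
  have hM₀ : ∀ i j, 0 ≤ M i j := fun _ _ => nonneg_of_mem_doublyStochastic hM
  calc ∑ j ∈ S, (x j - c) ≤ ∑ j ∈ S, ∑ i, (y i - c) * M i j := by
        gcongr with j
        simp only [sub_mul, sum_sub_distrib, ← mul_sum, sum_col_of_mem_doublyStochastic hM,
          mul_one]
        exact sub_le_sub_right (hxy j) c
    _ ≤ ∑ j ∈ S, ∑ i, (y i - c)⁺ * M i j := by
        gcongr with j _ i
        · exact hM₀ i j
        · exact le_posPart _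
    _ = ∑ i, (y i - c)⁺ * ∑ j ∈ S, M i j := by
        rw [sum_comm]
        simp only [mul_sum]
    _ ≤ ∑ i, (y i - c)⁺ * ∑ j, M i j := by
        gcongr with i
        · exact fun j _ _ => hM₀ i j
        · exact subset_univ S
    _ = ∑ i, (y i - c)⁺ := by simp [sum_row_of_mem_doublyStochastic hM]

theorem Matrix.of_norm_sq_mem_doublyStochastic_of_mem_unitaryGroup {n 𝕜 : Type*} [Fintype n]
    [DecidableEq n] [RCLike 𝕜] {U : Matrix n n 𝕜} (hU : U ∈ unitaryGroup n 𝕜) :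
    of (fun i j => ‖U i j‖ ^ 2) ∈ doublyStochastic ℝ n := by
  have hrow : ∀ i, ∑ j, (‖U i j‖ ^ 2 : 𝕜) = 1 := fun i => by
    simpa [mul_apply, RCLike.mul_conj] using congrFun₂ (mem_unitaryGroup_iff.mp hU) i i
  have hcol : ∀ j, ∑ i, (‖U i j‖ ^ 2 : 𝕜) = 1 := fun j => by
    simpa [mul_apply, RCLike.conj_mul] using congrFun₂ (mem_unitaryGroup_iff'.mp hU) j j
  refine mem_doublyStochastic_iff_sum.mpr
    ⟨fun i j => by simp only [of_apply]; positivity, fun i => ?_, fun j => ?_⟩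
  · exact_mod_cast hrow i
  · exact_mod_cast hcol j

namespace Matrix.IsHermitian

section RCLike

variable {n 𝕜 : Type*} [Fintype n] [DecidableEq n] [RCLike 𝕜] {A B : Matrix n n 𝕜}

theorem re_dotProduct_mulVec_eq_sum (hA : A.IsHermitian) (x : n → 𝕜) :
    RCLike.re (star x ⬝ᵥ A *ᵥ x) =
      ∑ i, hA.eigenvalues i * ‖(star (hA.eigenvectorUnitary : Matrix n n 𝕜) *ᵥ x) i‖ ^ 2 := by
  set U : Matrix n n 𝕜 := (hA.eigenvectorUnitary : Matrix n n 𝕜)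
  have hspec : A = U * diagonal (RCLike.ofReal ∘ hA.eigenvalues) * star U := hA.spectral_theorem
  have hx : star x ᵥ* U = star (star U *ᵥ x) := by
    rw [star_mulVec, star_eq_conjTranspose, conjTranspose_conjTranspose]
  conv_lhs => rw [hspec]
  rw [← mulVec_mulVec, ← mulVec_mulVec, dotProduct_mulVec, hx]
  simp only [dotProduct, mulVec_diagonal, map_sum]
  refine sum_congr rfl fun i _ => ?_
  rw [Pi.star_apply, RCLike.star_def, mul_left_comm, RCLike.conj_mul, Function.comp_apply]
  norm_cast

theorem sum_sub_le_sum_posPart_eigenvalues (hA : A.IsHermitian) (hB : B.IsHermitian)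
    (hAB : (A - B).PosSemidef) (S : Finset n) (c : ℝ) :
    ∑ j ∈ S, (hB.eigenvalues j - c) ≤ ∑ i, (hA.eigenvalues i - c)⁺ := by
  set U : Matrix n n 𝕜 := (hA.eigenvectorUnitary : Matrix n n 𝕜)
  set W : Matrix n n 𝕜 := (hB.eigenvectorUnitary : Matrix n n 𝕜)
  have hUW : star U * W ∈ unitaryGroup n 𝕜 :=
    (star hA.eigenvectorUnitary * hB.eigenvectorUnitary).2
  refine sum_sub_le_sum_posPart_of_le_vecMul
    (of_norm_sq_mem_doublyStochastic_of_mem_unitaryGroup hUW) (fun j => ?_) S c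
  have hcol : star U *ᵥ ⇑(hB.eigenvectorBasis j) = fun i => (star U * W) i j := by
    rw [← hB.eigenvectorUnitary_mulVec, mulVec_mulVec, mulVec_single_one]
    rfl
  have hquad := hAB.re_dotProduct_nonneg (hB.eigenvectorBasis j)
  rw [sub_mulVec, dotProduct_sub, map_sub, sub_nonneg, hA.re_dotProduct_mulVec_eq_sum, hcol,
    ← hB.eigenvalues_eq] at hquad
  simpa [vecMul, dotProduct, mul_comm] using hquad

end RCLike

theorem sum_map_sub_le_sum_map_posPart_roots {n : Type*} [Fintype n] [DecidableEq n]
    {A B : Matrix n n ℝ} (hA : A.IsHermitian) (hB : B.IsHermitian) (hAB : (A - B).PosSemidef)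
    {s : Multiset ℝ} (hs : s ≤ B.charpoly.roots) (c : ℝ) :
    (s.map (· - c)).sum ≤ (A.charpoly.roots.map fun x => (x - c)⁺).sum := by
  rw [hB.roots_charpoly_eq_eigenvalues, RCLike.ofReal_real_eq_id, Function.id_comp] at hs
  obtain ⟨S, -, rfl⟩ := exists_subset_map_val_eq hs
  simpa [hA.roots_charpoly_eq_eigenvalues, Multiset.map_map, Function.comp_def, sum_map_val]
    using hA.sum_sub_le_sum_posPart_eigenvalues hB hAB S c

end Matrix.IsHermitian

namespace SimpleGraph

variable {V : Type*} [Fintype V] [DecidableEq V]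

theorem posSemidef_lapMatrix_sub_of_le {R : Type*} [Field R] [LinearOrder R]
    [IsStrictOrderedRing R] [StarRing R] [TrivialStar R] {G H : SimpleGraph V}
    [DecidableRel G.Adj] [DecidableRel H.Adj] (h : H ≤ G) :
    (G.lapMatrix R - H.lapMatrix R).PosSemidef := by
  refine .of_dotProduct_mulVec_nonneg ((G.isHermitian_lapMatrix R).sub
    (H.isHermitian_lapMatrix R)) fun x => ?_
  rw [star_trivial, sub_mulVec, dotProduct_sub, sub_nonneg, ← toLinearMap₂'_apply',
    ← toLinearMap₂'_apply', lapMatrix_toLinearMap₂', lapMatrix_toLinearMap₂']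
  gcongr with i _ j _
  split_ifs with hH hG
  · rfl
  · exact absurd (h hH) hG
  · positivity
  · rfl

theorem trace_lapMatrix (R : Type*) [Ring R] (G : SimpleGraph V) [DecidableRel G.Adj] :
    (G.lapMatrix R).trace = 2 * #G.edgeFinset := by
  rw [lapMatrix, trace_sub, trace_adjMatrix, sub_zero, degMatrix, trace_diagonal,
    ← Nat.cast_sum, sum_degrees_eq_twice_card_edges, Nat.cast_mul, Nat.cast_ofNat]

theorem IsTree.sum_abs_sub_eq_two_mul_sum_posPart {G : SimpleGraph V} [DecidableRel G.Adj]
    (hT : G.IsTree) {ι : Type*} [Fintype ι] {μ : ι → ℝ}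
    (hμ : (G.lapMatrix ℝ).charpoly = ∏ i, (X - C (μ i))) :
    ∑ i, |μ i - (2 - 2 / Fintype.card V)| = 2 * ∑ i, (μ i - (2 - 2 / Fintype.card V))⁺ := by
  have hcard : Fintype.card ι = Fintype.card V := by
    simpa using congrArg natDegree hμ.symm
  have hE : (#G.edgeFinset : ℝ) + 1 = Fintype.card V := by exact_mod_cast hT.card_edgeFinset
  have : Nonempty V := hT.connected.nonempty
  have hV : (Fintype.card V : ℝ) ≠ 0 := Nat.cast_ne_zero.mpr Fintype.card_ne_zero
  rw [two_mul, ← two_nsmul]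
  refine sum_abs_eq_two_nsmul_sum_posPart univ ?_
  rw [sum_sub_distrib, ← trace_eq_sum_of_charpoly_eq_prod hμ, trace_lapMatrix, sum_const,
    card_univ, hcard, nsmul_eq_mul]
  field_simp
  linarith

end SimpleGraph

theorem laplacian_energy_edge_deletion_general (n n₁ n₂ : ℕ)
    (G : SimpleGraph (Fin n)) [DecidableRel G.Adj] (hT : G.IsTree)
    (v w : Fin n)
    (T₁ : SimpleGraph (Fin n₁)) [DecidableRel T₁.Adj]
    (T₂ : SimpleGraph (Fin n₂)) [DecidableRel T₂.Adj]
    (inst : DecidableRel (G.deleteEdges {s(v, w)}).Adj)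
    (hsplit : ((G.deleteEdges {s(v, w)}).lapMatrix ℝ).charpoly =
        (T₁.lapMatrix ℝ).charpoly * (T₂.lapMatrix ℝ).charpoly)
    (μ : Fin n → ℝ)
    (hμ : (G.lapMatrix ℝ).charpoly = ∏ i, (X - C (μ i)))
    (ν₁ : Fin n₁ → ℝ)
    (hν₁ : (T₁.lapMatrix ℝ).charpoly = ∏ i, (X - C (ν₁ i)))
    (ν₂ : Fin n₂ → ℝ)
    (hν₂ : (T₂.lapMatrix ℝ).charpoly = ∏ i, (X - C (ν₂ i)))
    (k₁ k₂ σ : ℕ)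
    (hσ : σ = k₁ + k₂) :
    ∑ i, |μ i - (2 - 2 / (n : ℝ))| ≥
      2 * (∑ i ∈ Finset.univ.filter fun i : Fin n₁ => (i : ℕ) < k₁, ν₁ i) +
        2 * (∑ i ∈ Finset.univ.filter fun i : Fin n₂ => (i : ℕ) < k₂, ν₂ i) -
        4 * σ + 4 * σ / n := by
  set d : ℝ := 2 - 2 / n
  set S₁ := univ.filter fun i : Fin n₁ => (i : ℕ) < k₁
  set S₂ := univ.filter fun i : Fin n₂ => (i : ℕ) < k₂
  have hn : (1 : ℝ) ≤ n := by exact_mod_cast Fin.pos_iff_nonempty.mpr hT.connected.nonempty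
  have hle : S₁.val.map ν₁ + S₂.val.map ν₂ ≤
      ((G.deleteEdges {s(v, w)}).lapMatrix ℝ).charpoly.roots := by
    rw [hsplit, hν₁, hν₂]
    exact map_add_map_le_roots_prod_mul_prod ν₁ ν₂ S₁ S₂
  have hkyfan := (G.isHermitian_lapMatrix ℝ).sum_map_sub_le_sum_map_posPart_roots
    (SimpleGraph.isHermitian_lapMatrix ℝ _) (G.posSemidef_lapMatrix_sub_of_le (G.deleteEdges_le _))
    hle d
  simp only [hμ, roots_prod_univ_X_sub_C, Multiset.map_map, Function.comp_def, Multiset.map_add,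
    Multiset.sum_add, sum_map_val] at hkyfan
  have hcard : (#S₁ + #S₂ : ℝ) ≤ σ := by
    rw [hσ, Fin.card_filter_val_lt, Fin.card_filter_val_lt]
    push_cast
    gcongr <;> exact_mod_cast min_le_right _ _
  have hd : 0 ≤ d := sub_nonneg.mpr (div_le_self zero_le_two hn)
  have hLE := hT.sum_abs_sub_eq_two_mul_sum_posPart hμ
  rw [Fintype.card_fin] at hLE
  rw [ge_iff_le, hLE]
  calc _ = 2 * (∑ i ∈ S₁, ν₁ i + ∑ i ∈ S₂, ν₂ i - d * σ) := by
          simp only [d]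
          ring
    _ ≤ 2 * (∑ i ∈ S₁, (ν₁ i - d) + ∑ i ∈ S₂, (ν₂ i - d)) := by
          simp only [sum_sub_distrib, sum_const, nsmul_eq_mul]
          linarith [mul_le_mul_of_nonneg_left hcard hd]
    _ ≤ 2 * ∑ i, (μ i - d)⁺ := by gcongr

theorem laplacian_energy_edge_deletion (n n₁ n₂ : ℕ) (hn : 8 ≤ n) (hn₁₂ : n₁ + n₂ = n)
    (G : SimpleGraph (Fin n)) [DecidableRel G.Adj] (hT : G.IsTree)
    (v w : Fin n) (hadj : G.Adj v w)
    (T₁ : SimpleGraph (Fin n₁)) [DecidableRel T₁.Adj] (hT₁ : T₁.Connected)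
    (T₂ : SimpleGraph (Fin n₂)) [DecidableRel T₂.Adj] (hT₂ : T₂.Connected)
    (inst : DecidableRel (G.deleteEdges {s(v, w)}).Adj)
    (hsplit : ((G.deleteEdges {s(v, w)}).lapMatrix ℝ).charpoly =
        (T₁.lapMatrix ℝ).charpoly * (T₂.lapMatrix ℝ).charpoly)
    (μ : Fin n → ℝ) (hμmono : Antitone μ)
    (hμ : (G.lapMatrix ℝ).charpoly = ∏ i, (X - C (μ i)))
    (ν₁ : Fin n₁ → ℝ) (hν₁mono : Antitone ν₁)
    (hν₁ : (T₁.lapMatrix ℝ).charpoly = ∏ i, (X - C (ν₁ i)))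
    (ν₂ : Fin n₂ → ℝ) (hν₂mono : Antitone ν₂)
    (hν₂ : (T₂.lapMatrix ℝ).charpoly = ∏ i, (X - C (ν₂ i)))
    (k₁ k₂ σ : ℕ)
    (hk₁ : k₁ = (Finset.univ.filter fun i : Fin n₁ => 2 - 4 / (n : ℝ) ≤ ν₁ i).card)
    (hk₂ : k₂ = (Finset.univ.filter fun i : Fin n₂ => 2 - 4 / (n : ℝ) ≤ ν₂ i).card)
    (hσ : σ = k₁ + k₂) :
    ∑ i, |μ i - (2 - 2 / (n : ℝ))| ≥
      2 * (∑ i ∈ Finset.univ.filter fun i : Fin n₁ => (i : ℕ) < k₁, ν₁ i) +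
        2 * (∑ i ∈ Finset.univ.filter fun i : Fin n₂ => (i : ℕ) < k₂, ν₂ i) -
        4 * σ + 4 * σ / n :=
  laplacian_energy_edge_deletion_general n n₁ n₂ G hT v w T₁ T₂ inst hsplit μ hμ ν₁ hν₁ ν₂ hν₂ k₁ k₂
    σ hσ
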